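/- Let $q$ be a power of an odd prime $p$ and $e$ a divisor of $q-1$ with $k = (q-1)/e$. If $p > \tfrac{3k}{2} - 1$, then every cyclotomic number satisfies $(a,b)_e \leq \lceil k/2 \rceil$ for all $0 \le a, b < e$. -/

import Mathlib

/-!
If `v` is counted by `(a,b)_e`, then `v ^ k = c` and `(v + 1) ^ k = d` for the fixed constants
`c = γ ^ (a k)`, `d = γ ^ (b k)`. Every such `v` is a double root of the polynomial
`d X ^ (k+1) - c (X + 1) ^ (k+1) + c d` of degree at most `k + 1`, so there are at most
`(k + 1) / 2` of them, as long as its derivative `(k + 1) (d X ^ k - c (X + 1) ^ k)` is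
nonzero, i.e. `p ∤ k + 1`.
The bound `p > 3k/2 - 1` leaves only `k = 1` and `k = 2, p = 3` with `p ∣ k + 1`,
where a direct argument shows there is at most one such `v`.
-/

open Finset

/-- The cyclotomic number `(a,b)_e`: the number of `v ∈ F \\ {0,-1}` with
`ind_γ v ≡ a (mod e)` and `ind_γ (v+1) ≡ b (mod e)`. -/
noncomputable def cycNum {F : Type*} [Field F] [Fintype F] (γ : F) (e a b : ℕ) : ℕ :=
  Nat.card {v : F // v ≠ 0 ∧ v ≠ -1 ∧ (∃ m : ℕ, γ ^ m = v ∧ m % e = a % e) ∧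
    (∃ n : ℕ, γ ^ n = v + 1 ∧ n % e = b % e)}

open Polynomial

theorem cycNum_zero {F : Type*} [Field F] [Fintype F] (e a b : ℕ) :
    cycNum (0 : F) e a b = 0 := by
  refine Nat.card_eq_zero.mpr (Or.inl ⟨?_⟩)
  rintro ⟨v, hv0, hv1, -, n, hn, -⟩
  cases n with
  | zero => exact hv0 (by simpa using hn.symm)
  | succ n => exact hv1 (eq_neg_of_add_eq_zero_left (by simpa using hn.symm))

theorem pow_eq_pow_of_mod_eq {M : Type*} [Monoid M] {γ v : M} {e k m a : ℕ}
    (hγ : γ ^ (e * k) = 1) (hm : γ ^ m = v) (hma : m % e = a % e) : v ^ k = γ ^ (a * k) := by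
  rw [← hm, ← pow_mul, pow_eq_pow_mod _ hγ, pow_eq_pow_mod (a * k) hγ,
    Nat.mul_mod_mul_right, Nat.mul_mod_mul_right, hma]

theorem le_natCeil_half_of_two_mul_le {n k : ℕ} (h : 2 * n ≤ k + 1) : n ≤ ⌈(k : ℚ) / 2⌉₊ := by
  have hq : (k : ℚ) ≤ 2 * ⌈(k : ℚ) / 2⌉₊ := by linarith [Nat.le_ceil ((k : ℚ) / 2)]
  have : k ≤ 2 * ⌈(k : ℚ) / 2⌉₊ := by exact_mod_cast hq
  omega

theorem le_two_of_prime_dvd_add_one {p k : ℕ} (hp : p.Prime) (hpk : (p : ℚ) > 3 * k / 2 - 1)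
    (hdvd : p ∣ k + 1) : k ≤ 2 := by
  have hle : p ≤ k + 1 := Nat.le_of_dvd k.succ_pos hdvd
  have hk : k < 4 := by
    have : (p : ℚ) ≤ k + 1 := by exact_mod_cast hle
    exact_mod_cast (by linarith : (k : ℚ) < 4)
  by_contra! h3
  obtain rfl : k = 3 := by omega
  obtain rfl : p = 4 := by
    have : (3 : ℚ) < p := by linarith
    have : 3 < p := by exact_mod_cast this
    omega
  exact absurd hp (by decide)

namespace Polynomial

variable {F : Type*} [Field F]

theorem mul_card_le_natDegree {P : F[X]} {n : ℕ} {S : Finset F}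
    (h : ∀ v ∈ S, n ≤ P.rootMultiplicity v) : n * #S ≤ P.natDegree := by
  classical
  have hle : n • S.val ≤ P.roots := Multiset.le_iff_count.mpr fun x => by
    rw [Multiset.count_nsmul, count_roots]
    by_cases hx : x ∈ S
    · rw [Multiset.count_eq_one_of_mem S.nodup hx, mul_one]
      exact h x hx
    · rw [Multiset.count_eq_zero_of_notMem hx, mul_zero]
      exact Nat.zero_le _
  simpa [mul_comm] using (Multiset.card_le_card hle).trans (card_roots' P)

noncomputable def powPairPoly (k : ℕ) (c d : F) : F[X] :=
  C d * X ^ (k + 1) - C c * (X + 1) ^ (k + 1) + C (c * d)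

theorem natDegree_powPairPoly_le (k : ℕ) (c d : F) : (powPairPoly k c d).natDegree ≤ k + 1 := by
  unfold powPairPoly
  compute_degree

theorem derivative_powPairPoly (k : ℕ) (c d : F) :
    derivative (powPairPoly k c d) = C ((k : F) + 1) * (C d * X ^ k - C c * (X + 1) ^ k) := by
  simp only [powPairPoly, derivative_add, derivative_sub, derivative_mul, derivative_C,
    derivative_pow, derivative_X, derivative_one, Nat.add_sub_cancel,
    Nat.cast_add, Nat.cast_one]
  ring

theorem derivative_powPairPoly_ne_zero {k : ℕ} {c : F} (d : F) (hk : k ≠ 0)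
    (hk1 : (k : F) + 1 ≠ 0) (hc : c ≠ 0) : derivative (powPairPoly k c d) ≠ 0 := by
  intro h
  have h0 := congrArg (eval 0) h
  simp only [derivative_powPairPoly, eval_mul, eval_sub, eval_add, eval_pow, eval_C, eval_X,
    eval_one, eval_zero, zero_pow hk, zero_add, one_pow, mul_zero, mul_one, zero_sub,
    mul_neg, neg_eq_zero] at h0
  exact mul_ne_zero hk1 hc h0

theorem one_lt_rootMultiplicity_powPairPoly {k : ℕ} {c d v : F} (hP : powPairPoly k c d ≠ 0)
    (hvc : v ^ k = c) (hvd : (v + 1) ^ k = d) : 1 < (powPairPoly k c d).rootMultiplicity v := by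
  rw [one_lt_rootMultiplicity_iff_isRoot hP, derivative_powPairPoly]
  constructor
  · simp only [IsRoot, powPairPoly, eval_add, eval_sub, eval_mul, eval_pow, eval_C, eval_X,
      eval_one, pow_succ, hvc, hvd]
    ring
  · simp only [IsRoot, eval_mul, eval_sub, eval_add, eval_pow, eval_C, eval_X, eval_one, hvc, hvd]
    ring

end Polynomial

section

variable {F : Type*} [Field F] {k : ℕ} {c d : F} {S : Finset F}

theorem two_mul_card_le_of_pow_eq_of_add_one_ne_zero (hk : k ≠ 0) (hk1 : (k : F) + 1 ≠ 0)
    (hc : c ≠ 0) (hS : ∀ v ∈ S, v ^ k = c ∧ (v + 1) ^ k = d) : 2 * #S ≤ k + 1 := by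
  have hP : powPairPoly k c d ≠ 0 := fun h =>
    derivative_powPairPoly_ne_zero d hk hk1 hc (by rw [h, derivative_zero])
  calc 2 * #S ≤ (powPairPoly k c d).natDegree :=
        mul_card_le_natDegree fun v hv =>
          one_lt_rootMultiplicity_powPairPoly hP (hS v hv).1 (hS v hv).2
    _ ≤ k + 1 := natDegree_powPairPoly_le k c d

theorem card_le_one_of_sq_eq (h2 : (2 : F) ≠ 0) (hS : ∀ v ∈ S, v ^ 2 = c ∧ (v + 1) ^ 2 = d) :
    #S ≤ 1 := by
  refine card_le_one.mpr fun x hx y hy => mul_left_cancel₀ h2 ?_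
  linear_combination ((hS x hx).2.trans (hS y hy).2.symm) - ((hS x hx).1.trans (hS y hy).1.symm)

theorem two_mul_card_le_of_pow_eq {p : ℕ} [CharP F p] (hp : p.Prime)
    (hpk : (p : ℚ) > 3 * k / 2 - 1) (hk : k ≠ 0) (hc : c ≠ 0)
    (hS : ∀ v ∈ S, v ^ k = c ∧ (v + 1) ^ k = d) : 2 * #S ≤ k + 1 := by
  by_cases hdvd : p ∣ k + 1
  · have hk2 := le_two_of_prime_dvd_add_one hp hpk hdvd
    obtain rfl | rfl : k = 1 ∨ k = 2 := by omega
    · have : #S ≤ 1 := card_le_one.mpr fun x hx y hy => by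
        simpa using (hS x hx).1.trans (hS y hy).1.symm
      omega
    · have h2 : (2 : F) ≠ 0 := by
        rw [← Nat.cast_ofNat, Ne, CharP.cast_eq_zero_iff F p]
        intro h2
        have := Nat.le_of_dvd two_pos h2
        have := hp.two_le
        obtain rfl : p = 2 := by omega
        omega
      have := card_le_one_of_sq_eq h2 hS
      omega
  · refine two_mul_card_le_of_pow_eq_of_add_one_ne_zero hk ?_ hc hS
    exact_mod_cast (CharP.cast_eq_zero_iff F p (k + 1)).not.mpr hdvd

end

theorem stmt_19_general {F : Type*} [Field F] [Fintype F] (p r e k : ℕ) (hp : p.Prime)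
    (hcard : Fintype.card F = p ^ r) (he : e ∣ Fintype.card F - 1)
    (hk : k = (Fintype.card F - 1) / e)
    (γ : F)
    (hp2 : (p : ℚ) > 3 * k / 2 - 1) :
    ∀ a b : ℕ, a < e → b < e → cycNum γ e a b ≤ ⌈(k : ℚ) / 2⌉₊ := by
  classical
  intro a b _ _
  rcases eq_or_ne γ 0 with rfl | hγ
  · simp only [cycNum_zero, zero_le]
  have : Fact p.Prime := ⟨hp⟩
  have : CharP F p := charP_of_card_eq_prime_pow hcard
  have hek : e * k = Fintype.card F - 1 := hk ▸ Nat.mul_div_cancel' he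
  have hγek : γ ^ (e * k) = 1 := hek ▸ FiniteField.pow_card_sub_one_eq_one γ hγ
  have hk0 : k ≠ 0 := by
    rintro rfl
    have := Fintype.one_lt_card (α := F)
    omega
  rw [cycNum, Nat.card_eq_fintype_card, Fintype.card_subtype]
  refine le_natCeil_half_of_two_mul_le
    (two_mul_card_le_of_pow_eq (d := γ ^ (b * k)) hp hp2 hk0 (pow_ne_zero (a * k) hγ) ?_)
  simp only [mem_filter, mem_univ, true_and]
  rintro v ⟨-, -, ⟨m, hm, hma⟩, n, hn, hnb⟩
  exact ⟨pow_eq_pow_of_mod_eq hγek hm hma, pow_eq_pow_of_mod_eq hγek hn hnb⟩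

theorem stmt_19 {F : Type*} [Field F] [Fintype F] (p r e k : ℕ) (hp : p.Prime) (hpodd : Odd p)
    (hcard : Fintype.card F = p ^ r) (he : e ∣ Fintype.card F - 1)
    (hk : k = (Fintype.card F - 1) / e)
    (γ : F) (hγ : ∀ x : F, x ≠ 0 → ∃ m : ℕ, γ ^ m = x)
    (hp2 : (p : ℚ) > 3 * k / 2 - 1) :
    ∀ a b : ℕ, a < e → b < e → cycNum γ e a b ≤ ⌈(k : ℚ) / 2⌉₊ :=
  stmt_19_general p r e k hp hcard he hk γ hp2
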